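/- arXiv:2304.12579 — 4 statements merged into one kernel-verified Lean document; each statement's English description precedes it below -/
import Mathlib

section
/- Let n ≥ 2 and d ≥ 1 be natural numbers, let 1 ≤ b ≤ n, and let v : Fin n → (Fin d → ℝ). Set v̄ = (1/n) Σ_{i=1}^n v_i and let Σ be the d × d matrix Σ = (1/n) Σ_{i=1}^n v_i v_iᵀ − v̄ v̄ᵀ, where u uᵀ denotes the outer product of a vector u with itself. For a subset B ⊆ Fin n of cardinality b, set ε_B = v̄ − (1/b) Σ_{i ∈ B} v_i. Then (1 / C(n, b)) · Σ_{B ⊆ Fin n, |B| = b} ε_B ε_Bᵀ = ((n − b) / (b (n − 1))) · Σ, where C(n, b) is the binomial coefficient. -/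
open Finset

lemma cardA' {α : Type*} [DecidableEq α] (s : Finset α) (b : ℕ) (i : α) (hi : i ∈ s) :
    ((powersetCard (b+1) s).filter (fun B => i ∈ B)).card = (s.card - 1).choose b := by
  rw [← card_erase_of_mem hi, ← card_powersetCard b (s.erase i)]
  refine card_bij' (fun B _ => B.erase i) (fun C _ => insert i C) ?hi ?hj ?li ?ri
  case hi =>
    intro B hB
    simp only [mem_filter, mem_powersetCard] at hB
    simp only [mem_powersetCard]
    exact ⟨erase_subset_erase i hB.1.1, by rw [card_erase_of_mem hB.2, hB.1.2]; rfl⟩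
  case hj =>
    intro C hC
    simp only [mem_powersetCard] at hC
    simp only [mem_filter, mem_powersetCard]
    have hiC : i ∉ C := fun h => (mem_erase.1 (hC.1 h)).1 rfl
    refine ⟨⟨insert_subset hi (hC.1.trans (erase_subset _ _)), ?_⟩, mem_insert_self _ _⟩
    rw [card_insert_of_notMem hiC, hC.2]
  case li =>
    intro B hB
    simp only [mem_filter] at hB
    exact insert_erase hB.2
  case ri =>
    intro C hC
    simp only [mem_powersetCard] at hC
    exact erase_insert (fun h => (mem_erase.1 (hC.1 h)).1 rfl)

lemma cardB' {α : Type*} [DecidableEq α] (s : Finset α) (b : ℕ) (i i' : α) (hi : i ∈ s)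
    (hi' : i' ∈ s) (hne : i ≠ i') :
    ((powersetCard (b+2) s).filter (fun B => i ∈ B ∧ i' ∈ B)).card = (s.card - 2).choose b := by
  have h2 : i' ∈ s.erase i := mem_erase.2 ⟨fun h => hne h.symm, hi'⟩
  have key := cardA' (s.erase i) b i' h2
  rw [card_erase_of_mem hi] at key
  rw [show s.card - 1 - 1 = s.card - 2 from by omega] at key
  rw [← key]
  refine card_bij' (fun B _ => B.erase i) (fun C _ => insert i C) ?hi ?hj ?li ?ri
  case hi =>
    intro B hB
    simp only [mem_filter, mem_powersetCard] at hB
    simp only [mem_filter, mem_powersetCard]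
    refine ⟨⟨erase_subset_erase i hB.1.1, ?_⟩, mem_erase.2 ⟨fun h => hne h.symm, hB.2.2⟩⟩
    rw [card_erase_of_mem hB.2.1, hB.1.2]; rfl
  case hj =>
    intro C hC
    simp only [mem_filter, mem_powersetCard] at hC
    simp only [mem_filter, mem_powersetCard]
    have hiC : i ∉ C := fun h => (mem_erase.1 (hC.1.1 h)).1 rfl
    refine ⟨⟨insert_subset hi (hC.1.1.trans (erase_subset _ _)), ?_⟩,
      mem_insert_self _ _, mem_insert_of_mem hC.2⟩
    rw [card_insert_of_notMem hiC, hC.1.2]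
  case li =>
    intro B hB
    simp only [mem_filter] at hB
    exact insert_erase hB.2.1
  case ri =>
    intro C hC
    simp only [mem_filter, mem_powersetCard] at hC
    exact erase_insert (fun h => (mem_erase.1 (hC.1.1 h)).1 rfl)

lemma sum_over_subsets {n b : ℕ} (f : Fin n → ℝ) (c1 : ℕ)
    (h1 : ∀ i : Fin n, ((powersetCard b (univ : Finset (Fin n))).filter
        (fun B => i ∈ B)).card = c1) :
    ∑ B ∈ powersetCard b (univ : Finset (Fin n)), ∑ i ∈ B, f i
      = (c1 : ℝ) * ∑ i, f i := by
  have h : ∀ B ∈ powersetCard b (univ : Finset (Fin n)),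
      ∑ i ∈ B, f i = ∑ i : Fin n, if i ∈ B then f i else 0 := by
    intro B _
    rw [Finset.sum_ite_mem, univ_inter]
  rw [Finset.sum_congr rfl h, Finset.sum_comm, Finset.mul_sum]
  refine Finset.sum_congr rfl fun i _ => ?_
  rw [← Finset.sum_filter, Finset.sum_const, nsmul_eq_mul, h1 i]

lemma sum_over_subsets_mul {n b : ℕ} (f g : Fin n → ℝ) (c1 c2 : ℕ)
    (h1 : ∀ i : Fin n, ((powersetCard b (univ : Finset (Fin n))).filter
        (fun B => i ∈ B)).card = c1)
    (h2 : ∀ i i' : Fin n, i ≠ i' → ((powersetCard b (univ : Finset (Fin n))).filter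
        (fun B => i ∈ B ∧ i' ∈ B)).card = c2) :
    ∑ B ∈ powersetCard b (univ : Finset (Fin n)), (∑ i ∈ B, f i) * (∑ i ∈ B, g i)
      = (c1 : ℝ) * ∑ i, f i * g i
        + (c2 : ℝ) * ((∑ i, f i) * (∑ i, g i) - ∑ i, f i * g i) := by
  have h : ∀ B ∈ powersetCard b (univ : Finset (Fin n)),
      (∑ i ∈ B, f i) * (∑ i ∈ B, g i)
        = ∑ i : Fin n, ∑ i' : Fin n, if i ∈ B ∧ i' ∈ B then f i * g i' else 0 := by
    intro B _
    rw [Finset.sum_mul_sum]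
    rw [show (∑ i ∈ B, ∑ i' ∈ B, f i * g i')
        = ∑ i ∈ B, ∑ i' : Fin n, if i' ∈ B then f i * g i' else 0 from
      Finset.sum_congr rfl fun i _ => by rw [Finset.sum_ite_mem, univ_inter]]
    rw [show (∑ i ∈ B, ∑ i' : Fin n, if i' ∈ B then f i * g i' else 0)
        = ∑ i : Fin n, if i ∈ B then (∑ i' : Fin n, if i' ∈ B then f i * g i' else 0) else 0
      from by rw [Finset.sum_ite_mem, univ_inter]]
    refine Finset.sum_congr rfl fun i _ => ?_
    by_cases hiB : i ∈ B <;> simp [hiB]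
  rw [Finset.sum_congr rfl h, Finset.sum_comm]
  have h' : ∀ i : Fin n,
      (∑ B ∈ powersetCard b (univ : Finset (Fin n)),
        ∑ i' : Fin n, if i ∈ B ∧ i' ∈ B then f i * g i' else 0)
      = (c1 : ℝ) * (f i * g i) + (c2 : ℝ) * (f i * (∑ i', g i') - f i * g i) := by
    intro i
    rw [Finset.sum_comm]
    have hsplit : ∀ i' : Fin n,
        (∑ B ∈ powersetCard b (univ : Finset (Fin n)),
          if i ∈ B ∧ i' ∈ B then f i * g i' else 0)
        = (((powersetCard b (univ : Finset (Fin n))).filter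
            (fun B => i ∈ B ∧ i' ∈ B)).card : ℝ) * (f i * g i') := by
      intro i'
      rw [← Finset.sum_filter, Finset.sum_const, nsmul_eq_mul]
    rw [Finset.sum_congr rfl fun i' _ => hsplit i']
    rw [← Finset.add_sum_erase _ _ (mem_univ i)]
    have hdiag : ((powersetCard b (univ : Finset (Fin n))).filter
        (fun B => i ∈ B ∧ i ∈ B)).card = c1 := by
      rw [← h1 i]; congr 1; exact Finset.filter_congr fun B _ => by simp
    rw [hdiag]
    have hoff : ∀ i' ∈ (univ : Finset (Fin n)).erase i,
        (((powersetCard b (univ : Finset (Fin n))).filter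
            (fun B => i ∈ B ∧ i' ∈ B)).card : ℝ) * (f i * g i')
          = (c2 : ℝ) * (f i * g i') := by
      intro i' hi'
      rw [h2 i i' (fun h => (mem_erase.1 hi').1 h.symm)]
    rw [Finset.sum_congr rfl hoff, ← Finset.mul_sum, ← Finset.mul_sum]
    have : ∑ i' ∈ (univ : Finset (Fin n)).erase i, g i' = (∑ i', g i') - g i := by
      rw [eq_sub_iff_add_eq, Finset.sum_erase_add _ _ (mem_univ i)]
    rw [this]; ring
  rw [Finset.sum_congr rfl fun i _ => h' i]
  rw [Finset.sum_add_distrib, ← Finset.mul_sum, ← Finset.mul_sum]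
  congr 1
  congr 1
  rw [Finset.sum_sub_distrib, ← Finset.sum_mul]

/-- The covariance of the mini-batch gradient noise, averaged over all mini-batches
`B ⊆ Fin n` of size `b` (sampling without replacement), equals
`((n − b) / (b (n − 1)))` times the covariance `Σ` of the individual vectors. -/
theorem stmt_2 (n d : ℕ) (hn : 2 ≤ n) (hd : 1 ≤ d) (b : ℕ) (hb1 : 1 ≤ b) (hbn : b ≤ n)
    (v : Fin n → Fin d → ℝ)
    (vbar : Fin d → ℝ) (hvbar : vbar = (1 / n : ℝ) • ∑ i, v i)
    (Sig : Matrix (Fin d) (Fin d) ℝ)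
    (hSig : Sig = (1 / n : ℝ) • ∑ i, Matrix.vecMulVec (v i) (v i)
        - Matrix.vecMulVec vbar vbar)
    (ε : Finset (Fin n) → Fin d → ℝ)
    (hε : ∀ B : Finset (Fin n), ε B = vbar - (1 / b : ℝ) • ∑ i ∈ B, v i) :
    (1 / (n.choose b) : ℝ) •
        ∑ B ∈ Finset.powersetCard b (Finset.univ : Finset (Fin n)),
          Matrix.vecMulVec (ε B) (ε B)
      = (((n : ℝ) - b) / (b * ((n : ℝ) - 1))) • Sig := by
  -- basic nonvanishing facts
  have hn0 : (n : ℝ) ≠ 0 := by positivity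
  have hb0 : (b : ℝ) ≠ 0 := by
    have : 0 < b := hb1
    positivity
  have hn1 : (n : ℝ) - 1 ≠ 0 := by
    have : (2 : ℝ) ≤ (n : ℝ) := by exact_mod_cast hn
    intro h; nlinarith
  have hCpos : 0 < n.choose b := Nat.choose_pos hbn
  have hC0 : ((n.choose b : ℕ) : ℝ) ≠ 0 := by positivity
  -- the diagonal count
  have h1 : ∀ i : Fin n, ((powersetCard b (univ : Finset (Fin n))).filter
      (fun B => i ∈ B)).card = (n-1).choose (b-1) := by
    intro i
    have h := cardA' (univ : Finset (Fin n)) (b-1) i (mem_univ i)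
    rw [Nat.sub_add_cancel hb1] at h
    rwa [card_univ, Fintype.card_fin] at h
  -- nat identity for the diagonal count
  have natid1 : n * (n-1).choose (b-1) = n.choose b * b := by
    have h := Nat.add_one_mul_choose_eq (n-1) (b-1)
    rw [Nat.sub_add_cancel (by omega : 1 ≤ n),
      Nat.sub_add_cancel hb1] at h
    exact h
  have R1 : ((n-1).choose (b-1) : ℝ) * n = (n.choose b : ℝ) * b := by
    have := congrArg (Nat.cast : ℕ → ℝ) natid1
    push_cast at this
    linarith
  -- the off-diagonal count and its identity
  obtain ⟨c2, h2, R2⟩ : ∃ c2 : ℕ,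
      (∀ i i' : Fin n, i ≠ i' → ((powersetCard b (univ : Finset (Fin n))).filter
        (fun B => i ∈ B ∧ i' ∈ B)).card = c2) ∧
      (c2 : ℝ) * ((n : ℝ) * ((n : ℝ) - 1)) = (n.choose b : ℝ) * ((b : ℝ) * ((b : ℝ) - 1)) := by
    rcases Nat.lt_or_ge b 2 with hb2 | hb2
    · have hbeq : b = 1 := by omega
      subst hbeq
      refine ⟨0, ?_, by push_cast; ring⟩
      intro i i' hne
      rw [Finset.card_eq_zero, Finset.filter_eq_empty_iff]
      intro B hB
      rintro ⟨hiB, hi'B⟩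
      rw [mem_powersetCard] at hB
      have : ({i, i'} : Finset (Fin n)) ⊆ B := by
        intro x hx
        rcases Finset.mem_insert.1 hx with h | h
        · exact h ▸ hiB
        · exact (Finset.mem_singleton.1 h) ▸ hi'B
      have h2le := Finset.card_le_card this
      rw [Finset.card_insert_of_notMem (by simpa using hne), Finset.card_singleton, hB.2] at h2le
      omega
    · refine ⟨(n-2).choose (b-2), ?_, ?_⟩
      · intro i i' hne
        have h := cardB' (univ : Finset (Fin n)) (b-2) i i' (mem_univ i) (mem_univ i') hne
        rw [show b - 2 + 2 = b from by omega] at h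
        rwa [card_univ, Fintype.card_fin] at h
      · have natid2 : (n-1) * (n-2).choose (b-2) = (n-1).choose (b-1) * (b-1) := by
          have h := Nat.add_one_mul_choose_eq (n-2) (b-2)
          rw [show n - 2 + 1 = n - 1 from by omega,
            show b - 2 + 1 = b - 1 from by omega] at h
          exact h
        have natid3 : n * ((n-1) * (n-2).choose (b-2)) = n.choose b * b * (b-1) := by
          rw [natid2, ← mul_assoc, natid1]
        have := congrArg (Nat.cast : ℕ → ℝ) natid3
        push_cast [Nat.cast_sub (by omega : 1 ≤ n), Nat.cast_sub (by omega : 1 ≤ b)] at this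
        nlinarith [this]
  -- entrywise computation
  subst hvbar hSig
  ext j k
  simp only [Matrix.smul_apply, Matrix.sub_apply, Matrix.sum_apply, Matrix.vecMulVec_apply,
    Pi.smul_apply, Finset.sum_apply, Pi.sub_apply, smul_eq_mul, hε]
  set F := ∑ i, v i j with hF
  set G := ∑ i, v i k with hG
  set P := ∑ i, v i j * v i k with hP
  have expand : ∀ B ∈ powersetCard b (univ : Finset (Fin n)),
      ((1 / (n:ℝ)) * F - (1 / (b:ℝ)) * ∑ i ∈ B, v i j) *
        ((1 / (n:ℝ)) * G - (1 / (b:ℝ)) * ∑ i ∈ B, v i k)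
      = ((1 / (n:ℝ)) * F * ((1 / (n:ℝ)) * G)
          - ((1 / (b:ℝ)) * ((1 / (n:ℝ)) * F)) * ∑ i ∈ B, v i k
          - ((1 / (b:ℝ)) * ((1 / (n:ℝ)) * G)) * ∑ i ∈ B, v i j)
        + ((1 / (b:ℝ)) * (1 / (b:ℝ))) * ((∑ i ∈ B, v i j) * (∑ i ∈ B, v i k)) := by
    intro B _
    ring
  rw [Finset.sum_congr rfl expand, Finset.sum_add_distrib, Finset.sum_sub_distrib,
    Finset.sum_sub_distrib, Finset.sum_const, ← Finset.mul_sum, ← Finset.mul_sum,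
    ← Finset.mul_sum, card_powersetCard, card_univ, Fintype.card_fin, nsmul_eq_mul,
    sum_over_subsets (fun i => v i j) _ h1, sum_over_subsets (fun i => v i k) _ h1,
    sum_over_subsets_mul (fun i => v i j) (fun i => v i k) _ c2 h1 h2]
  rw [← hF, ← hG, ← hP]
  set C := ((n.choose b : ℕ) : ℝ) with hCdef
  set N1 := (((n-1).choose (b-1) : ℕ) : ℝ) with hN1def
  have hN1 : N1 = C * b / n := by
    rw [eq_div_iff hn0]; exact R1
  have hc2 : (c2 : ℝ) = C * ((b:ℝ) * ((b:ℝ) - 1)) / ((n:ℝ) * ((n:ℝ) - 1)) := by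
    rw [eq_div_iff (mul_ne_zero hn0 hn1)]; exact R2
  rw [hN1, hc2]
  field_simp
  ring
end

section
/- Let E be a real inner product space, let T, n ≥ 1, let v : Fin T → Fin n → E, and let η : Fin T → ℝ with η_t ≥ 0 for all t. Set v̄_t = (1/n) Σ_{i=1}^n v_{t,i} and assume v̄_t ≠ 0 for all t, and set δ_t = η_t ‖v̄_t‖. Then (1/2^n) Σ_{σ ∈ {−1,1}^n} sup { (1/n) Σ_{i=1}^n σ_i Σ_{t=0}^{T−1} ⟨w_t, v_{t,i}⟩ : w : Fin T → E with ‖w_t‖ ≤ δ_t for all t } ≤ (1/√n) Σ_{t=0}^{T−1} η_t ‖v̄_t‖² √(1 + τ_t / ‖v̄_t‖²), where τ_t = (1/n) Σ_{i=1}^n ‖v_{t,i}‖² − ‖v̄_t‖². -/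
open RealInnerProductSpace

private def rsign (b : Bool) : ℝ := if b then 1 else -1

private lemma rsign_not (b : Bool) : rsign (!b) = -rsign b := by
  cases b <;> simp [rsign]

private lemma eps_orth {n : ℕ} (i j : Fin n) (hij : i ≠ j) :
    ∑ σ : Fin n → Bool, rsign (σ i) * rsign (σ j) = 0 := by
  set e : (Fin n → Bool) → (Fin n → Bool) := fun σ => Function.update σ j (!(σ j)) with he
  have hinv : Function.Involutive e := by
    intro σ
    funext k
    by_cases hk : k = j
    · subst hk; simp [he]
    · simp [he, Function.update_of_ne hk]
  have hsum : ∑ σ : Fin n → Bool, rsign (σ i) * rsign (σ j)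
      = ∑ σ : Fin n → Bool, rsign ((e σ) i) * rsign ((e σ) j) :=
    (Fintype.sum_bijective e hinv.bijective _ _ (fun σ => by rw [hinv σ]))
  have hterm : ∀ σ : Fin n → Bool,
      rsign ((e σ) i) * rsign ((e σ) j) = -(rsign (σ i) * rsign (σ j)) := by
    intro σ
    have h1 : (e σ) i = σ i := Function.update_of_ne hij _ _
    have h2 : (e σ) j = !(σ j) := Function.update_self _ _ _
    rw [h1, h2, rsign_not]
    ring
  rw [Finset.sum_congr rfl (fun σ _ => hterm σ), Finset.sum_neg_distrib] at hsum
  linarith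

private lemma eps_orth' {n : ℕ} (i j : Fin n) :
    ∑ σ : Fin n → Bool, rsign (σ i) * rsign (σ j) = if i = j then (2:ℝ)^n else 0 := by
  by_cases h : i = j
  · subst h
    simp only [if_pos rfl]
    have : ∀ σ : Fin n → Bool, rsign (σ i) * rsign (σ i) = 1 := by
      intro σ; cases σ i <;> simp [rsign]
    rw [Finset.sum_congr rfl (fun σ _ => this σ), Finset.sum_const]
    simp [Fintype.card_fun]
  · rw [if_neg h]; exact eps_orth i j h

private lemma sum_norm_sq {E : Type*} [NormedAddCommGroup E] [InnerProductSpace ℝ E]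
    {n : ℕ} (w : Fin n → E) :
    ∑ σ : Fin n → Bool, ‖∑ i, rsign (σ i) • w i‖ ^ 2 = 2 ^ n * ∑ i, ‖w i‖ ^ 2 := by
  have expand : ∀ σ : Fin n → Bool, ‖∑ i, rsign (σ i) • w i‖ ^ 2
      = ∑ i, ∑ j, rsign (σ i) * rsign (σ j) * ⟪w i, w j⟫ := by
    intro σ
    rw [← real_inner_self_eq_norm_sq, sum_inner]
    refine Finset.sum_congr rfl fun i _ => ?_
    rw [real_inner_smul_left, inner_sum, Finset.mul_sum]
    refine Finset.sum_congr rfl fun j _ => ?_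
    rw [real_inner_smul_right]; ring
  calc ∑ σ : Fin n → Bool, ‖∑ i, rsign (σ i) • w i‖ ^ 2
      = ∑ σ : Fin n → Bool, ∑ i, ∑ j, rsign (σ i) * rsign (σ j) * ⟪w i, w j⟫ :=
        Finset.sum_congr rfl fun σ _ => expand σ
    _ = ∑ i, ∑ j, (∑ σ : Fin n → Bool, rsign (σ i) * rsign (σ j)) * ⟪w i, w j⟫ := by
        rw [Finset.sum_comm]
        refine Finset.sum_congr rfl fun i _ => ?_
        rw [Finset.sum_comm]
        refine Finset.sum_congr rfl fun j _ => ?_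
        rw [Finset.sum_mul]
    _ = ∑ i, ∑ j, (if i = j then (2:ℝ)^n else 0) * ⟪w i, w j⟫ := by
        refine Finset.sum_congr rfl fun i _ => Finset.sum_congr rfl fun j _ => ?_
        rw [eps_orth']
    _ = ∑ i, (2:ℝ)^n * ⟪w i, w i⟫ := by
        refine Finset.sum_congr rfl fun i _ => ?_
        simp [ite_mul]
    _ = 2 ^ n * ∑ i, ‖w i‖ ^ 2 := by
        rw [Finset.mul_sum]
        refine Finset.sum_congr rfl fun i _ => ?_
        rw [real_inner_self_eq_norm_sq]

/-- Lemma A.3 of the paper in finite-sum form: with radii `δₜ = ηₜ ‖v̄ₜ‖`, the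
Rademacher complexity of the additive linear class is bounded by
`(1/√n) Σₜ ηₜ ‖v̄ₜ‖² √(1 + τₜ/‖v̄ₜ‖²)`, where `τₜ = (1/n) Σᵢ ‖v t i‖² − ‖v̄ₜ‖²`. -/
theorem stmt_9 {E : Type*} [NormedAddCommGroup E] [InnerProductSpace ℝ E]
    (T n : ℕ) (hT : 1 ≤ T) (hn : 1 ≤ n)
    (v : Fin T → Fin n → E) (η : Fin T → ℝ) (hη : ∀ t, 0 ≤ η t)
    (vbar : Fin T → E) (hvbar : ∀ t, vbar t = (1 / n : ℝ) • ∑ i, v t i)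
    (hne : ∀ t, vbar t ≠ 0)
    (δ : Fin T → ℝ) (hδ : ∀ t, δ t = η t * ‖vbar t‖)
    (τ : Fin T → ℝ) (hτ : ∀ t, τ t = (1 / n : ℝ) * ∑ i, ‖v t i‖ ^ 2 - ‖vbar t‖ ^ 2) :
    (1 / 2 ^ n : ℝ) * ∑ σ : Fin n → Bool,
        sSup {x : ℝ | ∃ w : Fin T → E, (∀ t, ‖w t‖ ≤ δ t) ∧
          x = (1 / n : ℝ) * ∑ i, (if σ i then (1 : ℝ) else -1) * ∑ t, ⟪w t, v t i⟫}
      ≤ (1 / Real.sqrt n) * ∑ t, η t * ‖vbar t‖ ^ 2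
          * Real.sqrt (1 + τ t / ‖vbar t‖ ^ 2) := by
  have hN : (0:ℝ) < n := by exact_mod_cast hn
  have hδ0 : ∀ t, 0 ≤ δ t := fun t => by
    rw [hδ]; exact mul_nonneg (hη t) (norm_nonneg _)
  set u : Fin T → (Fin n → Bool) → E :=
    fun t σ => (1 / n : ℝ) • ∑ i, rsign (σ i) • v t i with hu
  -- Step 1: sSup bound per σ
  have step1 : ∀ σ : Fin n → Bool,
      sSup {x : ℝ | ∃ w : Fin T → E, (∀ t, ‖w t‖ ≤ δ t) ∧
        x = (1 / n : ℝ) * ∑ i, (if σ i then (1 : ℝ) else -1) * ∑ t, ⟪w t, v t i⟫}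
      ≤ ∑ t, δ t * ‖u t σ‖ := by
    intro σ
    apply Real.sSup_le
    · rintro x ⟨w, hw, rfl⟩
      have hx : (1 / n : ℝ) * ∑ i, (if σ i then (1 : ℝ) else -1) * ∑ t, ⟪w t, v t i⟫
          = ∑ t, ⟪w t, u t σ⟫ := by
        have h1 : ∑ i, (if σ i then (1 : ℝ) else -1) * ∑ t, ⟪w t, v t i⟫
            = ∑ t, ⟪w t, ∑ i, rsign (σ i) • v t i⟫ := by
          calc ∑ i, (if σ i then (1 : ℝ) else -1) * ∑ t, ⟪w t, v t i⟫
              = ∑ i, ∑ t, rsign (σ i) * ⟪w t, v t i⟫ := by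
                refine Finset.sum_congr rfl fun i _ => ?_
                rw [Finset.mul_sum]; rfl
            _ = ∑ t, ∑ i, rsign (σ i) * ⟪w t, v t i⟫ := Finset.sum_comm
            _ = ∑ t, ⟪w t, ∑ i, rsign (σ i) • v t i⟫ := by
                refine Finset.sum_congr rfl fun t _ => ?_
                rw [inner_sum]
                exact Finset.sum_congr rfl fun i _ => (real_inner_smul_right _ _ _).symm
        rw [h1, Finset.mul_sum]
        exact Finset.sum_congr rfl fun t _ => (real_inner_smul_right _ _ _).symm
      rw [hx]
      refine Finset.sum_le_sum fun t _ => ?_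
      calc ⟪w t, u t σ⟫ ≤ ‖w t‖ * ‖u t σ‖ := real_inner_le_norm _ _
        _ ≤ δ t * ‖u t σ‖ := mul_le_mul_of_nonneg_right (hw t) (norm_nonneg _)
    · exact Finset.sum_nonneg fun t _ => mul_nonneg (hδ0 t) (norm_nonneg _)
  -- Step 3: per-t Jensen/Cauchy-Schwarz bound on the average of ‖u t σ‖
  have step3 : ∀ t : Fin T, (1 / 2 ^ n : ℝ) * ∑ σ : Fin n → Bool, ‖u t σ‖
      ≤ Real.sqrt ((1 / (n : ℝ) ^ 2) * ∑ i, ‖v t i‖ ^ 2) := by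
    intro t
    have hB : ∑ σ : Fin n → Bool, ‖u t σ‖ ^ 2
        = (1 / (n : ℝ)) ^ 2 * (2 ^ n * ∑ i, ‖v t i‖ ^ 2) := by
      have hterm : ∀ σ : Fin n → Bool,
          ‖u t σ‖ ^ 2 = (1 / (n : ℝ)) ^ 2 * ‖∑ i, rsign (σ i) • v t i‖ ^ 2 := by
        intro σ
        simp only [hu]
        rw [norm_smul, mul_pow, Real.norm_eq_abs, sq_abs]
      rw [Finset.sum_congr rfl (fun σ _ => hterm σ), ← Finset.mul_sum, sum_norm_sq]
    have hA2 : (∑ σ : Fin n → Bool, ‖u t σ‖) ^ 2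
        ≤ (∑ σ : Fin n → Bool, ‖u t σ‖ ^ 2) * 2 ^ n := by
      have h := Finset.sum_mul_sq_le_sq_mul_sq Finset.univ
        (fun σ : Fin n → Bool => ‖u t σ‖) (fun _ => (1 : ℝ))
      simpa [Fintype.card_fun] using h
    have hx0 : (0:ℝ) ≤ (1 / 2 ^ n : ℝ) * ∑ σ : Fin n → Bool, ‖u t σ‖ := by
      have : (0:ℝ) ≤ ∑ σ : Fin n → Bool, ‖u t σ‖ :=
        Finset.sum_nonneg fun σ _ => norm_nonneg _
      positivity
    rw [Real.le_sqrt hx0 (by positivity)]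
    calc ((1 / 2 ^ n : ℝ) * ∑ σ : Fin n → Bool, ‖u t σ‖) ^ 2
        = (1 / 2 ^ n : ℝ) ^ 2 * (∑ σ : Fin n → Bool, ‖u t σ‖) ^ 2 := by ring
      _ ≤ (1 / 2 ^ n : ℝ) ^ 2 * ((∑ σ : Fin n → Bool, ‖u t σ‖ ^ 2) * 2 ^ n) :=
          mul_le_mul_of_nonneg_left hA2 (by positivity)
      _ = (1 / (n : ℝ) ^ 2) * ∑ i, ‖v t i‖ ^ 2 := by
          rw [hB]
          have h2 : (2:ℝ) ^ n ≠ 0 := by positivity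
          field_simp
  -- Step 4: per-t algebraic identity
  have step4 : ∀ t : Fin T, δ t * Real.sqrt ((1 / (n : ℝ) ^ 2) * ∑ i, ‖v t i‖ ^ 2)
      = (1 / Real.sqrt n) * (η t * ‖vbar t‖ ^ 2 * Real.sqrt (1 + τ t / ‖vbar t‖ ^ 2)) := by
    intro t
    have hb : 0 < ‖vbar t‖ := norm_pos_iff.mpr (hne t)
    have h1 : (1 / (n : ℝ) ^ 2) * ∑ i, ‖v t i‖ ^ 2
        = (1 / (n : ℝ)) * (τ t + ‖vbar t‖ ^ 2) := by
      rw [hτ t]; field_simp; ring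
    have h2 : τ t + ‖vbar t‖ ^ 2 = ‖vbar t‖ ^ 2 * (1 + τ t / ‖vbar t‖ ^ 2) := by
      field_simp; ring
    rw [h1, Real.sqrt_mul (by positivity), h2, Real.sqrt_mul (by positivity),
      Real.sqrt_sq hb.le, hδ t, one_div, Real.sqrt_inv]
    ring
  -- Assemble
  calc (1 / 2 ^ n : ℝ) * ∑ σ : Fin n → Bool,
        sSup {x : ℝ | ∃ w : Fin T → E, (∀ t, ‖w t‖ ≤ δ t) ∧
          x = (1 / n : ℝ) * ∑ i, (if σ i then (1 : ℝ) else -1) * ∑ t, ⟪w t, v t i⟫}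
      ≤ (1 / 2 ^ n : ℝ) * ∑ σ : Fin n → Bool, ∑ t, δ t * ‖u t σ‖ :=
        mul_le_mul_of_nonneg_left (Finset.sum_le_sum fun σ _ => step1 σ) (by positivity)
    _ = ∑ t, δ t * ((1 / 2 ^ n : ℝ) * ∑ σ : Fin n → Bool, ‖u t σ‖) := by
        rw [Finset.sum_comm, Finset.mul_sum]
        refine Finset.sum_congr rfl fun t _ => ?_
        rw [← Finset.mul_sum]; ring
    _ ≤ ∑ t, δ t * Real.sqrt ((1 / (n : ℝ) ^ 2) * ∑ i, ‖v t i‖ ^ 2) :=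
        Finset.sum_le_sum fun t _ => mul_le_mul_of_nonneg_left (step3 t) (hδ0 t)
    _ = (1 / Real.sqrt n) * ∑ t, η t * ‖vbar t‖ ^ 2
          * Real.sqrt (1 + τ t / ‖vbar t‖ ^ 2) := by
        rw [Finset.mul_sum]
        exact Finset.sum_congr rfl fun t _ => step4 t
end

section
/- Let Z be a measurable space, μ a probability measure on Z, C ≥ 0 a real number, and H a nonempty countable family of measurable functions h : Z → ℝ with |h(z)| ≤ C for every h ∈ H and z ∈ Z. Fix points z_1, …, z_n ∈ Z (n ≥ 1). Then sup_{h ∈ H} ( ∫_Z h dμ − (1/n) Σ_{i=1}^n h(z_i) ) ≤ 2 · E[ sup_{h ∈ H} (1/n) Σ_{i=1}^n σ_i h(W_i) ], where the expectation is over Z'_1, …, Z'_n drawn i.i.d. with law μ and an independent uniformly distributed sign vector σ ∈ {−1,1}^n, and W_i = Z'_i if σ_i = 1 while W_i = z_i if σ_i = −1. -/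
open MeasureTheory

lemma my_map_eval {ι : Type*} [Fintype ι] [DecidableEq ι] {Z : Type*} [MeasurableSpace Z]
    (μ : Measure Z) [IsProbabilityMeasure μ] (i : ι) :
    MeasurePreserving (Function.eval i) (Measure.pi fun _ : ι => μ) μ := by
  refine ⟨measurable_pi_apply i, ?_⟩
  ext s hs
  rw [Measure.map_apply (measurable_pi_apply i) hs, Set.eval_preimage,
    Measure.pi_pi]
  rw [Finset.prod_eq_single i]
  · simp
  · intro j _ hj; simp [Function.update_of_ne hj]
  · simp

/-- Symmetrization inequality (Equation (20) of the paper): for a fixed sample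
`z₁, …, zₙ` and a nonempty countable uniformly bounded family `(h k)` of
measurable functions, the worst-case generalization gap is bounded by twice the
Rademacher-type average over an independent ghost sample `Z' ∼ μⁿ` mixed with
the fixed sample according to the signs `σ`. -/
theorem stmt_10 {Z : Type*} [MeasurableSpace Z] (μ : Measure Z) [IsProbabilityMeasure μ]
    (C : ℝ) (hC : 0 ≤ C)
    (h : ℕ → Z → ℝ) (hmeas : ∀ k, Measurable (h k))
    (hbd : ∀ k z, |h k z| ≤ C)
    (n : ℕ) (hn : 1 ≤ n) (z : Fin n → Z) :
    (⨆ k, (∫ x, h k x ∂μ - (1 / n : ℝ) * ∑ i, h k (z i)))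
      ≤ 2 * ((1 / 2 ^ n : ℝ) * ∑ σ : Fin n → Bool,
          ∫ z' : Fin n → Z,
            (⨆ k, (1 / n : ℝ) * ∑ i,
              (if σ i then (1 : ℝ) else -1) * h k (if σ i then z' i else z i))
            ∂(Measure.pi fun _ : Fin n => μ)) := by
  set ν : Measure (Fin n → Z) := Measure.pi fun _ : Fin n => μ with hν
  have hνprob : IsProbabilityMeasure ν := by rw [hν]; infer_instance
  have hnpos : (0:ℝ) < n := by exact_mod_cast hn
  set f : (Fin n → Bool) → ℕ → (Fin n → Z) → ℝ := fun σ k z' =>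
    (1 / n : ℝ) * ∑ i, (if σ i then (1 : ℝ) else -1) * h k (if σ i then z' i else z i) with hf
  set g : ℕ → (Fin n → Z) → ℝ := fun k z' =>
    (1 / n : ℝ) * ∑ i, (h k (z' i) - h k (z i)) with hg
  -- bounds on f and g
  have hfabs : ∀ σ k z', |f σ k z'| ≤ C := by
    intro σ k z'
    rw [hf]
    simp only [abs_mul, abs_of_nonneg (by positivity : (0:ℝ) ≤ 1/(n:ℝ))]
    calc (1/n:ℝ) * |∑ i, (if σ i then (1 : ℝ) else -1) * h k (if σ i then z' i else z i)|
        ≤ (1/n:ℝ) * ∑ i : Fin n, C := by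
          gcongr
          refine (Finset.abs_sum_le_sum_abs _ _).trans ?_
          refine Finset.sum_le_sum fun i _ => ?_
          rw [abs_mul]
          rcases Bool.eq_false_or_eq_true (σ i) with hb | hb <;>
            simp [hb, hbd]
      _ = C := by
          rw [Finset.sum_const, Finset.card_univ, Fintype.card_fin]
          field_simp
          rw [nsmul_eq_mul]
  have hgabs : ∀ k z', |g k z'| ≤ 2 * C := by
    intro k z'
    rw [hg]
    simp only [abs_mul, abs_of_nonneg (by positivity : (0:ℝ) ≤ 1/(n:ℝ))]
    calc (1/n:ℝ) * |∑ i, (h k (z' i) - h k (z i))|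
        ≤ (1/n:ℝ) * ∑ i : Fin n, (2*C) := by
          gcongr
          refine (Finset.abs_sum_le_sum_abs _ _).trans ?_
          refine Finset.sum_le_sum fun i _ => ?_
          calc |h k (z' i) - h k (z i)| ≤ |h k (z' i)| + |h k (z i)| := abs_sub _ _
            _ ≤ C + C := add_le_add (hbd _ _) (hbd _ _)
            _ = 2*C := by ring
      _ = 2*C := by
          rw [Finset.sum_const, Finset.card_univ, Fintype.card_fin]
          field_simp
          rw [nsmul_eq_mul]; ring
  have hfbdd : ∀ σ z', BddAbove (Set.range fun k => f σ k z') := by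
    intro σ z'
    exact ⟨C, by rintro x ⟨k, rfl⟩; exact (abs_le.1 (hfabs σ k z')).2⟩
  have hgbdd : ∀ z', BddAbove (Set.range fun k => g k z') := by
    intro z'
    exact ⟨2*C, by rintro x ⟨k, rfl⟩; exact (abs_le.1 (hgabs k z')).2⟩
  -- measurability
  have hfmeas : ∀ σ k, Measurable (fun z' => f σ k z') := by
    intro σ k
    apply Measurable.const_mul
    apply Finset.measurable_sum
    intro i _
    refine Measurable.const_mul ?_ _
    rcases Bool.eq_false_or_eq_true (σ i) with hb | hb
    · have he : (fun z' : Fin n → Z => h k (if σ i = true then z' i else z i))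
          = fun w => h k (w i) := by funext w; rw [hb]; simp
      rw [he]; exact (hmeas k).comp (measurable_pi_apply i)
    · have he : (fun z' : Fin n → Z => h k (if σ i = true then z' i else z i))
          = fun _ => h k (z i) := by funext w; rw [hb]; simp
      rw [he]; exact measurable_const
  have hgmeas : ∀ k, Measurable (fun z' => g k z') := by
    intro k
    apply Measurable.const_mul
    apply Finset.measurable_sum
    intro i _
    exact ((hmeas k).comp (measurable_pi_apply i)).sub measurable_const
  have hFmeas : Measurable (fun z' => ⨆ k, g k z') := Measurable.iSup hgmeas
  have hGmeas : ∀ σ, Measurable (fun z' => ⨆ k, f σ k z') :=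
    fun σ => Measurable.iSup (hfmeas σ)
  -- integrability
  have hFint : Integrable (fun z' => ⨆ k, g k z') ν := by
    refine ⟨hFmeas.aestronglyMeasurable, ?_⟩
    apply HasFiniteIntegral.of_bounded (C := 2*C)
    filter_upwards with z'
    rw [Real.norm_eq_abs, abs_le]
    constructor
    · exact le_trans (abs_le.1 (hgabs 0 z')).1 (le_ciSup (hgbdd z') 0)
    · exact ciSup_le fun k => (abs_le.1 (hgabs k z')).2
  have hGint : ∀ σ, Integrable (fun z' => ⨆ k, f σ k z') ν := by
    intro σ
    refine ⟨(hGmeas σ).aestronglyMeasurable, ?_⟩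
    apply HasFiniteIntegral.of_bounded (C := C)
    filter_upwards with z'
    rw [Real.norm_eq_abs, abs_le]
    constructor
    · exact le_trans (abs_le.1 (hfabs σ 0 z')).1 (le_ciSup (hfbdd σ z') 0)
    · exact ciSup_le fun k => (abs_le.1 (hfabs σ k z')).2
  have hgint : ∀ k, Integrable (fun z' => g k z') ν := by
    intro k
    refine ⟨(hgmeas k).aestronglyMeasurable, ?_⟩
    apply HasFiniteIntegral.of_bounded (C := 2*C)
    filter_upwards with z'
    rw [Real.norm_eq_abs]
    exact hgabs k z'
  have hint_i : ∀ k (i : Fin n), Integrable (fun z' : Fin n → Z => h k (z' i)) ν := by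
    intro k i
    refine ⟨((hmeas k).comp (measurable_pi_apply i)).aestronglyMeasurable, ?_⟩
    apply HasFiniteIntegral.of_bounded (C := C)
    filter_upwards with z'
    rw [Real.norm_eq_abs]; exact hbd _ _
  -- step 1: ∫ g k dν = ∫ h k dμ - (1/n)∑ h k (z i)
  have hstep1 : ∀ k, ∫ x, h k x ∂μ - (1 / n : ℝ) * ∑ i, h k (z i) = ∫ z', g k z' ∂ν := by
    intro k
    have heval : ∀ i : Fin n, ∫ z', h k (z' i) ∂ν = ∫ x, h k x ∂μ := by
      intro i
      have := integral_map (φ := Function.eval i) (μ := ν) (f := h k)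
        (measurable_pi_apply i).aemeasurable (hmeas k).aestronglyMeasurable
      rw [(my_map_eval μ i).map_eq] at this
      exact this.symm
    have : ∫ z', g k z' ∂ν
        = (1/n:ℝ) * ∑ i : Fin n, ∫ z', (h k (z' i) - h k (z i)) ∂ν := by
      rw [hg]
      simp only
      rw [integral_const_mul, integral_finset_sum]
      intro i _
      exact (hint_i k i).sub (integrable_const _)
    rw [this]
    have hterm : ∀ i : Fin n, ∫ z', (h k (z' i) - h k (z i)) ∂ν
        = ∫ x, h k x ∂μ - h k (z i) := by
      intro i
      rw [integral_sub (hint_i k i) (integrable_const _), integral_const, heval i]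
      simp
    simp only [hterm, Finset.sum_sub_distrib, Finset.sum_const, Finset.card_univ,
      Fintype.card_fin, nsmul_eq_mul]
    field_simp
  -- key identity
  have hkey : ∀ σ k z', g k z' = f σ k z' + f (fun i => !σ i) k z' := by
    intro σ k z'
    rw [hf, hg]
    simp only
    rw [← mul_add, ← Finset.sum_add_distrib]
    congr 1
    refine Finset.sum_congr rfl fun i _ => ?_
    rcases Bool.eq_false_or_eq_true (σ i) with hb | hb <;> simp [hb] <;> ring
  -- pointwise symmetrization
  have hpt : ∀ z', (⨆ k, g k z')
      ≤ 2 * ((1 / 2 ^ n : ℝ) * ∑ σ : Fin n → Bool, ⨆ k, f σ k z') := by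
    intro z'
    have h1 : ∀ σ, (⨆ k, g k z') ≤ (⨆ k, f σ k z') + (⨆ k, f (fun i => !σ i) k z') := by
      intro σ
      refine ciSup_le fun k => ?_
      rw [hkey σ k z']
      exact add_le_add (le_ciSup (hfbdd σ z') k) (le_ciSup (hfbdd _ z') k)
    have hcard : (Fintype.card (Fin n → Bool) : ℝ) = 2 ^ n := by
      simp [Fintype.card_fun]
    have h2 : (2:ℝ)^n * (⨆ k, g k z')
        ≤ ∑ σ : Fin n → Bool, ((⨆ k, f σ k z') + (⨆ k, f (fun i => !σ i) k z')) := by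
      calc (2:ℝ)^n * (⨆ k, g k z')
          = ∑ _σ : Fin n → Bool, (⨆ k, g k z') := by
            rw [Finset.sum_const, Finset.card_univ, hcard.symm]; simp [nsmul_eq_mul]
        _ ≤ _ := Finset.sum_le_sum fun σ _ => h1 σ
    have h3 : ∑ σ : Fin n → Bool, (⨆ k, f (fun i => !σ i) k z')
        = ∑ σ : Fin n → Bool, ⨆ k, f σ k z' := by
      have hinv : Function.Involutive (fun σ : Fin n → Bool => fun i => !σ i) := by
        intro σ; funext i; simp
      exact Fintype.sum_equiv hinv.toPerm _ _ (fun σ => rfl)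
    rw [Finset.sum_add_distrib, h3] at h2
    have h2pow : (0:ℝ) < 2^n := by positivity
    have heq : 2 * ((1 / 2 ^ n : ℝ) * ∑ σ : Fin n → Bool, ⨆ k, f σ k z')
        = (2 / 2 ^ n) * ∑ σ : Fin n → Bool, ⨆ k, f σ k z' := by ring
    rw [heq, div_mul_eq_mul_div, le_div_iff₀ h2pow, mul_comm]
    linarith
  -- integrate
  have hm : (⨆ k, (∫ x, h k x ∂μ - (1 / n : ℝ) * ∑ i, h k (z i)))
      ≤ ∫ z', (⨆ k, g k z') ∂ν := by
    refine ciSup_le fun k => ?_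
    rw [hstep1 k]
    exact integral_mono (hgint k) hFint fun z' => le_ciSup (hgbdd z') k
  refine hm.trans ?_
  have hRint : Integrable
      (fun z' => 2 * ((1 / 2 ^ n : ℝ) * ∑ σ : Fin n → Bool, ⨆ k, f σ k z')) ν := by
    apply Integrable.const_mul
    apply Integrable.const_mul
    exact integrable_finset_sum _ fun σ _ => hGint σ
  calc ∫ z', (⨆ k, g k z') ∂ν
      ≤ ∫ z', 2 * ((1 / 2 ^ n : ℝ) * ∑ σ : Fin n → Bool, ⨆ k, f σ k z') ∂ν :=
        integral_mono hFint hRint hpt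
    _ = 2 * ((1 / 2 ^ n : ℝ) * ∑ σ : Fin n → Bool, ∫ z', (⨆ k, f σ k z') ∂ν) := by
        rw [integral_const_mul, integral_const_mul, integral_finset_sum _ fun σ _ => hGint σ]
end

section
/- Let E be a real inner product space, β ≥ 0, and let F, G : E → ℝ be differentiable at every point with β-Lipschitz gradients. Let T ≥ 1, let J_0, …, J_T ∈ E, and suppose there exist reals M ≥ 0, η_0, …, η_{T−1} ≥ 0, η_m ≥ 0 and c ≥ 0 such that ‖J_{t+1} − J_t‖ ≤ η_t M, η_t ≤ η_m for every t < T, and T · η_m ≤ c. Then |(F(J_T) − G(J_T)) − (F(J_0) − G(J_0)) − Σ_{t=0}^{T−1} ⟨∇F(J_t) − ∇G(J_t), J_{t+1} − J_t⟩| ≤ β c η_m M². -/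
open RealInnerProductSpace

lemma taylor_quad {E : Type*} [NormedAddCommGroup E] [InnerProductSpace ℝ E]
    (β : ℝ) (hβ : 0 ≤ β) (f : E → ℝ) (f' : E → E)
    (hf : ∀ x, HasFDerivAt f (innerSL ℝ (f' x)) x)
    (hlip : ∀ x y, ‖f' x - f' y‖ ≤ β * ‖x - y‖) (x y : E) :
    |f y - f x - ⟪f' x, y - x⟫| ≤ β / 2 * ‖y - x‖ ^ 2 := by
  set v := y - x with hv
  have hcont : Continuous f' := by
    apply (LipschitzWith.of_dist_le_mul (K := β.toNNReal) ?_).continuous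
    intro a b
    simp only [dist_eq_norm]
    calc ‖f' a - f' b‖ ≤ β * ‖a - b‖ := hlip a b
      _ ≤ β.toNNReal * ‖a - b‖ := by
        gcongr; exact Real.le_coe_toNNReal β
  set ψ : ℝ → ℝ := fun t => ⟪f' (x + t • v) - f' x, v⟫ with hψ
  have hψcont : Continuous ψ := by
    apply Continuous.inner
    · exact (hcont.comp (by continuity)).sub continuous_const
    · exact continuous_const
  have hderiv : ∀ t ∈ Set.uIcc (0:ℝ) 1,
      HasDerivAt (fun t : ℝ => f (x + t • v) - t * ⟪f' x, v⟫) (ψ t) t := by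
    intro t _
    have h1 : HasDerivAt (fun t : ℝ => x + t • v) v t := by
      simpa using ((hasDerivAt_id t).smul_const v).const_add x
    have h2 := (hf (x + t • v)).comp_hasDerivAt t h1
    simp only [innerSL_apply_apply] at h2
    have h3 : HasDerivAt (fun t : ℝ => t * ⟪f' x, v⟫) ⟪f' x, v⟫ t := by
      simpa using (hasDerivAt_id t).mul_const (⟪f' x, v⟫)
    have := h2.sub h3
    simp only [hψ, inner_sub_left]; exact this
  have hint : IntervalIntegrable ψ MeasureTheory.volume 0 1 :=
    hψcont.intervalIntegrable 0 1
  have hFTC := intervalIntegral.integral_eq_sub_of_hasDerivAt hderiv hint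
  have heq : f y - f x - ⟪f' x, v⟫ = ∫ t in (0:ℝ)..1, ψ t := by
    rw [hFTC]; simp [hv]; ring
  rw [heq]
  have hbound : ∀ t ∈ Set.Ioc (0:ℝ) 1, ‖ψ t‖ ≤ (β * ‖v‖ ^ 2) * t := by
    intro t ht
    calc ‖ψ t‖ ≤ ‖f' (x + t • v) - f' x‖ * ‖v‖ := by
          simpa using norm_inner_le_norm (𝕜 := ℝ) (f' (x + t • v) - f' x) v
      _ ≤ (β * ‖t • v‖) * ‖v‖ := by
          gcongr
          simpa using hlip (x + t • v) x
      _ = (β * ‖v‖ ^ 2) * t := by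
          rw [norm_smul, Real.norm_eq_abs, abs_of_pos ht.1]; ring
  have key := intervalIntegral.norm_integral_le_abs_of_norm_le (f := ψ)
      (μ := MeasureTheory.volume) (a := 0) (b := 1) (g := fun t => (β * ‖v‖ ^ 2) * t)
      (by
        filter_upwards [MeasureTheory.ae_restrict_mem measurableSet_uIoc] with t ht
        rw [Set.uIoc_of_le (by norm_num : (0:ℝ) ≤ 1)] at ht
        exact hbound t ht)
      (by apply Continuous.intervalIntegrable; continuity)
  have hgval : (∫ t in (0:ℝ)..1, (β * ‖v‖ ^ 2) * t) = β / 2 * ‖v‖ ^ 2 := by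
    rw [intervalIntegral.integral_const_mul]
    simp [integral_id]
    ring
  rw [hgval] at key
  calc |∫ t in (0:ℝ)..1, ψ t| = ‖∫ t in (0:ℝ)..1, ψ t‖ := (Real.norm_eq_abs _).symm
    _ ≤ |β / 2 * ‖v‖ ^ 2| := key
    _ = β / 2 * ‖v‖ ^ 2 := abs_of_nonneg (by positivity)

/-- Quantitative form of `|gen^{nl}(J_T)| = O(η_m)` (Proposition A.1): if the
steps satisfy `‖J_{t+1} − J_t‖ ≤ ηₜ M` with `ηₜ ≤ η_m` and `T·η_m ≤ c`, and `F`,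
`G` have `β`-Lipschitz gradients, then the non-linear part of the gap is at most
`β c η_m M²`. -/
theorem stmt_13 {E : Type*} [NormedAddCommGroup E] [InnerProductSpace ℝ E]
    (β : ℝ) (hβ : 0 ≤ β)
    (F G : E → ℝ) (F' G' : E → E)
    (hF : ∀ x, HasFDerivAt F (innerSL ℝ (F' x)) x) (hG : ∀ x, HasFDerivAt G (innerSL ℝ (G' x)) x)
    (hFlip : ∀ x y, ‖F' x - F' y‖ ≤ β * ‖x - y‖)
    (hGlip : ∀ x y, ‖G' x - G' y‖ ≤ β * ‖x - y‖)
    (T : ℕ) (hT : 1 ≤ T) (J : ℕ → E)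
    (M : ℝ) (hM : 0 ≤ M) (η : ℕ → ℝ) (hη : ∀ t, 0 ≤ η t)
    (ηm : ℝ) (hηm : 0 ≤ ηm) (c : ℝ) (hc : 0 ≤ c)
    (hstep : ∀ t < T, ‖J (t + 1) - J t‖ ≤ η t * M)
    (hηle : ∀ t < T, η t ≤ ηm)
    (hTηm : (T : ℝ) * ηm ≤ c) :
    |(F (J T) - G (J T)) - (F (J 0) - G (J 0))
        - ∑ t ∈ Finset.range T, ⟪F' (J t) - G' (J t), J (t + 1) - J t⟫|
      ≤ β * c * ηm * M ^ 2 := by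
  set D : ℕ → ℝ := fun t =>
    (F (J (t + 1)) - G (J (t + 1))) - (F (J t) - G (J t))
      - ⟪F' (J t) - G' (J t), J (t + 1) - J t⟫ with hD
  have hkey : (F (J T) - G (J T)) - (F (J 0) - G (J 0))
      - ∑ t ∈ Finset.range T, ⟪F' (J t) - G' (J t), J (t + 1) - J t⟫
      = ∑ t ∈ Finset.range T, D t := by
    have htel : ∑ t ∈ Finset.range T, ((F (J (t+1)) - G (J (t+1))) - (F (J t) - G (J t)))
        = (F (J T) - G (J T)) - (F (J 0) - G (J 0)) :=
      Finset.sum_range_sub (fun n => F (J n) - G (J n)) T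
    rw [hD, Finset.sum_sub_distrib, htel]
  rw [hkey]
  have hterm : ∀ t < T, |D t| ≤ β * ηm ^ 2 * M ^ 2 := by
    intro t ht
    have hF2 := taylor_quad β hβ F F' hF hFlip (J t) (J (t + 1))
    have hG2 := taylor_quad β hβ G G' hG hGlip (J t) (J (t + 1))
    have hDeq : D t = (F (J (t+1)) - F (J t) - ⟪F' (J t), J (t+1) - J t⟫)
        - (G (J (t+1)) - G (J t) - ⟪G' (J t), J (t+1) - J t⟫) := by
      simp only [hD, inner_sub_left]; ring
    have h1 : |D t| ≤ β * ‖J (t+1) - J t‖ ^ 2 := by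
      rw [hDeq]
      calc |_| ≤ _ + _ := abs_sub _ _
        _ ≤ β / 2 * ‖J (t+1) - J t‖ ^ 2 + β / 2 * ‖J (t+1) - J t‖ ^ 2 := add_le_add hF2 hG2
        _ = β * ‖J (t+1) - J t‖ ^ 2 := by ring
    have hn : ‖J (t+1) - J t‖ ≤ ηm * M := le_trans (hstep t ht)
      (mul_le_mul_of_nonneg_right (hηle t ht) hM)
    calc |D t| ≤ β * ‖J (t+1) - J t‖ ^ 2 := h1
      _ ≤ β * (ηm * M) ^ 2 := by gcongr <;> first | exact norm_nonneg _ | exact hn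
      _ = β * ηm ^ 2 * M ^ 2 := by ring
  calc |∑ t ∈ Finset.range T, D t| ≤ ∑ t ∈ Finset.range T, |D t| :=
        Finset.abs_sum_le_sum_abs _ _
    _ ≤ ∑ t ∈ Finset.range T, β * ηm ^ 2 * M ^ 2 :=
        Finset.sum_le_sum (fun t ht => hterm t (Finset.mem_range.mp ht))
    _ = (T : ℝ) * (β * ηm ^ 2 * M ^ 2) := by
        rw [Finset.sum_const, Finset.card_range, nsmul_eq_mul]
    _ ≤ β * c * ηm * M ^ 2 := by
        have h0 : 0 ≤ β * ηm * M ^ 2 := by positivity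
        have := mul_le_mul_of_nonneg_right hTηm h0
        nlinarith
end
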